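/- Fix a transmission energy threshold Ē, a battery capacity B_cap, an initial battery level B0 ≤ B_cap, and a harvest sequence H : ℕ → ℕ. For every admissible usage sequence ε and every time t ∈ ℕ, the battery trajectories of ε and of the greedy usage sequence satisfy B_ε(t+1) + Ē · N^A_ε(t) ≤ B_g(t+1) + Ē · N^A_g(t). -/

import Mathlib

/-- Battery trajectory induced by a usage sequence `ε`:
`B_ε(0) = B0`, `B_ε(t+1) = min(Bcap, max(0, B_ε(t) + H(t) - ε(t)))`
(truncated subtraction on `ℕ` realizes the `max(0, ·)`). -/
def batt (Bcap B0 : ℕ) (H ε : ℕ → ℕ) : ℕ → ℕ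
  | 0 => B0
  | t + 1 => min Bcap (batt Bcap B0 H ε t + H t - ε t)

/-- A usage sequence is admissible if it never uses more energy than is available. -/
def Admissible (Bcap B0 : ℕ) (H ε : ℕ → ℕ) : Prop :=
  ∀ t, ε t ≤ batt Bcap B0 H ε t + H t

/-- Battery trajectory of the greedy usage sequence. -/
def greedyBatt (Ebar Bcap B0 : ℕ) (H : ℕ → ℕ) : ℕ → ℕ
  | 0 => B0
  | t + 1 =>
    min Bcap (greedyBatt Ebar Bcap B0 H t + H t -
      (if Ebar ≤ greedyBatt Ebar Bcap B0 H t + H t then Ebar else 0))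

/-- The greedy usage sequence: use exactly `Ebar` units of energy whenever possible. -/
def greedyUse (Ebar Bcap B0 : ℕ) (H : ℕ → ℕ) (t : ℕ) : ℕ :=
  if Ebar ≤ greedyBatt Ebar Bcap B0 H t + H t then Ebar else 0

/-- Number of transmission attempts of the usage sequence `ε` through time `t`,
i.e. `#{τ ≤ t : ε(τ) ≥ Ebar}`. -/
def attempts (Ebar : ℕ) (ε : ℕ → ℕ) (t : ℕ) : ℕ :=
  ((Finset.range (t + 1)).filter fun τ => Ebar ≤ ε τ).card

/-!
Compare an admissible schedule `ε` with the greedy one through the pair of invariants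
`B_ε(t) + Ē·n_ε(t) ≤ B_g(t) + Ē·n_g(t)` and `n_ε(t) ≤ n_g(t)`, where `n(t)` counts attempts
strictly before `t`. Both survive one step: if `ε` attempts while greedy cannot, then
`B_g(t) + H(t) < Ē ≤ B_ε(t) + H(t)`, so the first invariant forces `n_ε(t) < n_g(t)` and the
extra attempt is paid for by the slack in the counts. The cap `min Bcap ·` only helps, since
the count side of the comparison never decreases.
-/

/-- Attempts strictly before `t`; `attempts Ebar ε t` is `attemptsBefore Ebar ε (t + 1)` by `rfl`. -/
def attemptsBefore (Ebar : ℕ) (ε : ℕ → ℕ) (t : ℕ) : ℕ :=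
  ((Finset.range t).filter fun τ => Ebar ≤ ε τ).card

theorem attemptsBefore_succ (Ebar : ℕ) (ε : ℕ → ℕ) (t : ℕ) :
    attemptsBefore Ebar ε (t + 1) = attemptsBefore Ebar ε t + if Ebar ≤ ε t then 1 else 0 := by
  rw [attemptsBefore, Finset.range_add_one, Finset.filter_insert]
  split_ifs
  · exact Finset.card_insert_of_notMem (by simp)
  · rfl

theorem batt_succ (Bcap B0 : ℕ) (H ε : ℕ → ℕ) (t : ℕ) :
    batt Bcap B0 H ε (t + 1) = min Bcap (batt Bcap B0 H ε t + H t - ε t) := rfl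

theorem greedyBatt_succ (Ebar Bcap B0 : ℕ) (H : ℕ → ℕ) (t : ℕ) :
    greedyBatt Ebar Bcap B0 H (t + 1) =
      min Bcap (greedyBatt Ebar Bcap B0 H t + H t - greedyUse Ebar Bcap B0 H t) := rfl

theorem le_greedyUse_iff (Ebar Bcap B0 : ℕ) (H : ℕ → ℕ) (t : ℕ) :
    Ebar ≤ greedyUse Ebar Bcap B0 H t ↔ Ebar ≤ greedyBatt Ebar Bcap B0 H t + H t := by
  unfold greedyUse
  split_ifs <;> omega

theorem min_add_le_min_add {α : Type*} [AddCommMonoid α] [LinearOrder α] [IsOrderedAddMonoid α]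
    {K x y c d : α} (hxy : x + c ≤ y + d) (hcd : c ≤ d) : min K x + c ≤ min K y + d := by
  rw [← min_add_add_right, ← min_add_add_right]
  exact min_le_min (add_le_add_right hcd K) hxy

/-- One step of the exchange argument, before capping: `b, g` are the two battery levels,
`h` the harvest, `e` the usage of the competitor and `n, m` the two attempt counts. -/
theorem greedy_exchange_step (Ebar h b g e n m : ℕ) (he : e ≤ b + h)
    (hinv : b + Ebar * n ≤ g + Ebar * m) (hnm : n ≤ m) :
    b + h - e + Ebar * (n + if Ebar ≤ e then 1 else 0) ≤
        g + h - (if Ebar ≤ g + h then Ebar else 0) + Ebar * (m + if Ebar ≤ g + h then 1 else 0) ∧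
      n + (if Ebar ≤ e then 1 else 0) ≤ m + if Ebar ≤ g + h then 1 else 0 := by
  have hmul : Ebar * n ≤ Ebar * m := Nat.mul_le_mul_left Ebar hnm
  simp only [Nat.mul_add]
  split_ifs
  · omega
  · have hlt : n < m := Nat.lt_of_mul_lt_mul_left (a := Ebar) (by omega)
    have hslack : Ebar * n + Ebar * 1 ≤ Ebar * m := by
      rw [← Nat.mul_add]
      exact Nat.mul_le_mul_left Ebar hlt
    omega
  · omega
  · omega

theorem greedy_attempt_invariant (Ebar Bcap B0 : ℕ) (H ε : ℕ → ℕ)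
    (hadm : Admissible Bcap B0 H ε) (t : ℕ) :
    batt Bcap B0 H ε t + Ebar * attemptsBefore Ebar ε t ≤
        greedyBatt Ebar Bcap B0 H t + Ebar * attemptsBefore Ebar (greedyUse Ebar Bcap B0 H) t ∧
      attemptsBefore Ebar ε t ≤ attemptsBefore Ebar (greedyUse Ebar Bcap B0 H) t := by
  induction t with
  | zero => exact ⟨le_rfl, le_rfl⟩
  | succ t ih =>
    obtain ⟨hbatt, hcount⟩ :=
      greedy_exchange_step Ebar (H t) _ _ _ _ _ (hadm t) ih.1 ih.2
    rw [batt_succ, greedyBatt_succ, attemptsBefore_succ, attemptsBefore_succ,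
      if_congr (le_greedyUse_iff Ebar Bcap B0 H t) rfl rfl]
    exact ⟨min_add_le_min_add hbatt (Nat.mul_le_mul_left Ebar hcount), hcount⟩

theorem greedy_battery_attempt_inequality_general (Ebar Bcap B0 : ℕ)
    (H ε : ℕ → ℕ) (hadm : Admissible Bcap B0 H ε) (t : ℕ) :
    batt Bcap B0 H ε (t + 1) + Ebar * attempts Ebar ε t ≤
      greedyBatt Ebar Bcap B0 H (t + 1) +
        Ebar * attempts Ebar (greedyUse Ebar Bcap B0 H) t :=
  (greedy_attempt_invariant Ebar Bcap B0 H ε hadm (t + 1)).1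

/-- Along every sample path, the battery trajectory of any admissible usage sequence,
offset by `Ebar` times its attempt count, is dominated by the corresponding quantity
for the greedy usage sequence:
`B_ε(t+1) + Ē·N^A_ε(t) ≤ B_g(t+1) + Ē·N^A_g(t)`. -/
theorem greedy_battery_attempt_inequality (Ebar Bcap B0 : ℕ) (hB0 : B0 ≤ Bcap)
    (H ε : ℕ → ℕ) (hadm : Admissible Bcap B0 H ε) (t : ℕ) :
    batt Bcap B0 H ε (t + 1) + Ebar * attempts Ebar ε t ≤
      greedyBatt Ebar Bcap B0 H (t + 1) +
        Ebar * attempts Ebar (greedyUse Ebar Bcap B0 H) t :=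
  greedy_battery_attempt_inequality_general Ebar Bcap B0 H ε hadm t
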